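/- There exists an infinite sequence of k-uniform edge-minimal hypertrees (k ≥ 3) with n_m vertices and e_m edges where n_m is strictly increasing and e_m ∼ (1/(k−1))·C(n_m, 2) as m → ∞. Concretely, for m divisible by k−1, the hypergraph H_m on the (l+1)×m grid of vertices (l = C(m−1, k−2)), with edges {v_{ij}, v_{r s_1}, …, v_{r s_{k−1}}} for i < r and {s_1,…,s_{k−1}} a class of the i-th parallel class B_i of a Baranyai 1-factorization of the complete (k−1)-uniform hypergraph on [m], is an edge-minimal 2-hypertree with C(l+1, 2)·m²/(k−1) edges. -/

import Mathlib

/-!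
Rows are indexed by `ZMod (2M + 3)` and oriented by the regular tournament in which `i` beats
`i + 1, …, i + M + 1`; a row has `(2M + 3)(k - 1)` vertices `(position, level)`. An edge is an apex
`u` together with a line of slope `r - u.1` in a row `r` beaten by the row of `u`: for fixed rows
these lines partition row `r` (the role of a parallel class in Baranyai's factorization), and a
line remembers the row of its apex. Hence two distinct edges sharing `k - 1` vertices share
exactly a line and have apexes in one row. This rules out three consecutive edges of a chain, so
there are no semicycles and no chains of length `3`. A vertex `u` and a vertex `v` in a row beaten
by that of `u` lie in exactly one edge; this gives chain-connectedness (inside a row through a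
common line), edge-minimality, and `(M + 1)(2M + 3)³(k - 1) ∼ C(n, 2)/(k - 1)` edges on
`n = (2M + 3)²(k - 1)` vertices.
-/

variable {V : Type*} [DecidableEq V]

/-- The list of consecutive `k`-windows (as finsets) of a vertex sequence. -/
def windows (k : ℕ) (w : List V) : List (Finset V) :=
  (List.range (w.length + 1 - k)).map fun i => ((w.drop i).take k).toFinset

/-- `w` is the vertex sequence of a chain: `v₁ ≠ v_l`, each window is a `k`-set,
and the `l - k + 1` window edges are pairwise distinct. -/
def IsChainSeq (k : ℕ) (w : List V) : Prop :=
  k ≤ w.length ∧ w.head? ≠ w.getLast? ∧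
  (∀ e ∈ windows k w, e.card = k) ∧ (windows k w).Nodup

/-- `w` is the vertex sequence of a semicycle: `v₁ = v_l`, each window is a `k`-set,
and the `l - k + 1` window edges are pairwise distinct. -/
def IsSemicycleSeq (k : ℕ) (w : List V) : Prop :=
  k ≤ w.length ∧ w.head? = w.getLast? ∧
  (∀ e ∈ windows k w, e.card = k) ∧ (windows k w).Nodup

/-- A hypergraph with edge set `E` contains no semicycle as a subhypergraph. -/
def SemicycleFree (k : ℕ) (E : Finset (Finset V)) : Prop :=
  ¬ ∃ w : List V, IsSemicycleSeq k w ∧ ∀ e ∈ windows k w, e ∈ E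

/-- Every two distinct vertices of `S` lie in a common chain subhypergraph of `E`. -/
def ChainConnOn (k : ℕ) (S : Finset V) (E : Finset (Finset V)) : Prop :=
  ∀ u ∈ S, ∀ v ∈ S, u ≠ v →
    ∃ w : List V, IsChainSeq k w ∧ (∀ e ∈ windows k w, e ∈ E) ∧ u ∈ w ∧ v ∈ w

/-- Chain-connectedness on the whole (finite) vertex type. -/
def ChainConn [Fintype V] (k : ℕ) (E : Finset (Finset V)) : Prop :=
  ChainConnOn k Finset.univ E

/-- A `k`-uniform hypertree: chain-connected and semicycle-free. -/
def IsHypertree [Fintype V] (k : ℕ) (E : Finset (Finset V)) : Prop :=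
  (∀ e ∈ E, e.card = k) ∧ ChainConn k E ∧ SemicycleFree k E

/-- Every chain subhypergraph of `E` has length (number of edges) at most `l`. -/
def ChainsLenLE (k l : ℕ) (E : Finset (Finset V)) : Prop :=
  ∀ w : List V, IsChainSeq k w → (∀ e ∈ windows k w, e ∈ E) →
    w.length + 1 - k ≤ l

/-- An `l`-hypertree: a hypertree all of whose chains have length at most `l`. -/
def IsLHypertree [Fintype V] (k l : ℕ) (E : Finset (Finset V)) : Prop :=
  IsHypertree k E ∧ ChainsLenLE k l E

/-- Edge-minimal: deleting any edge destroys chain-connectedness. -/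
def EdgeMinimal [Fintype V] (k : ℕ) (E : Finset (Finset V)) : Prop :=
  ∀ e ∈ E, ¬ ChainConn k (E.erase e)

/-- Edge-maximal: adding any new `k`-set as an edge creates a semicycle. -/
def EdgeMaximal [Fintype V] (k : ℕ) (E : Finset (Finset V)) : Prop :=
  ∀ s : Finset V, s.card = k → s ∉ E → ¬ SemicycleFree k (insert s E)

/-- `S` is a (tight) star subhypergraph of `E`: a nonempty set of edges of `E`
all containing a common `(k-1)`-set kernel. -/
def IsStarSub (k : ℕ) (E S : Finset (Finset V)) : Prop :=
  S ⊆ E ∧ S.Nonempty ∧ ∃ K : Finset V, K.card = k - 1 ∧ ∀ e ∈ S, K ⊆ e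

/-- `S` is a maximal star subhypergraph of `E`. -/
def IsMaxStar (k : ℕ) (E S : Finset (Finset V)) : Prop :=
  IsStarSub k E S ∧ ∀ T, IsStarSub k E T → S ⊆ T → S = T

open Finset

def window (k : ℕ) (w : List V) (i : ℕ) : Finset V := ((w.drop i).take k).toFinset

section Windows

variable {k : ℕ} {w : List V}

lemma windows_eq_map_window (k : ℕ) (w : List V) :
    windows k w = (List.range (w.length + 1 - k)).map (window k w) := rfl

lemma length_windows (k : ℕ) (w : List V) : (windows k w).length = w.length + 1 - k := by
  simp [windows]

lemma getElem_windows {i : ℕ} (h : i < (windows k w).length) :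
    (windows k w)[i] = window k w i := by
  simp [windows_eq_map_window]

lemma mem_windows {e : Finset V} :
    e ∈ windows k w ↔ ∃ i < w.length + 1 - k, window k w i = e := by
  simp [windows_eq_map_window]

lemma window_mem_windows {i : ℕ} (h : i + k ≤ w.length) : window k w i ∈ windows k w :=
  mem_windows.2 ⟨i, by omega, rfl⟩

lemma window_injective_of_nodup (hnd : (windows k w).Nodup) {i j : ℕ}
    (hi : i + k ≤ w.length) (hj : j + k ≤ w.length) (h : window k w i = window k w j) :
    i = j := by
  have hl := length_windows k w
  rw [← getElem_windows (by omega), ← getElem_windows (by omega)] at h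
  exact (hnd.getElem_inj_iff).1 h

lemma getElem_mem_window {i j : ℕ} (hj : j < k) (h : i + j < w.length) :
    w[i + j] ∈ window k w i := by
  rw [window, List.mem_toFinset, List.mem_iff_getElem?]
  exact ⟨j, by rw [List.getElem?_take, if_pos hj, List.getElem?_drop, List.getElem?_eq_getElem h]⟩

lemma card_window_le (i : ℕ) : #(window k w i) ≤ k :=
  (List.toFinset_card_le _).trans (List.length_take_le _ _)

lemma mem_window_of_mem (hk : 0 < k) (hlen : k ≤ w.length) {u : V} (hu : u ∈ w) :
    ∃ i < w.length + 1 - k, u ∈ window k w i := by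
  obtain ⟨j, hj, rfl⟩ := List.getElem_of_mem hu
  by_cases hjk : j + k ≤ w.length
  · exact ⟨j, by omega, by simpa using getElem_mem_window (k := k) (i := j) hk (by omega)⟩
  · refine ⟨w.length - k, by omega, ?_⟩
    have := getElem_mem_window (w := w) (k := k) (i := w.length - k) (j := j - (w.length - k))
      (by omega) (by omega)
    simpa [show w.length - k + (j - (w.length - k)) = j by omega] using this

lemma window_eq_insert (hk : 1 ≤ k) {i : ℕ} (h : i + k ≤ w.length) :
    window k w i = insert w[i] (window (k - 1) w (i + 1)) := by
  obtain ⟨k, rfl⟩ : ∃ k', k = k' + 1 := ⟨k - 1, by omega⟩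
  rw [window, window, List.drop_eq_getElem_cons (by omega), List.take_succ_cons,
    List.toFinset_cons, Nat.add_sub_cancel]

lemma window_succ_eq_insert (hk : 1 ≤ k) {i : ℕ} (h : i + k + 1 ≤ w.length) :
    window k w (i + 1) = insert w[i + k] (window (k - 1) w (i + 1)) := by
  obtain ⟨k, rfl⟩ : ∃ k', k = k' + 1 := ⟨k - 1, by omega⟩
  have hlast : (w.drop (i + 1))[k]? = some w[i + (k + 1)] := by
    rw [List.getElem?_drop, List.getElem?_eq_getElem (by omega)]; congr 2; omega
  rw [window, List.take_add_one, hlast]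
  ext; simp [window, or_comm]

lemma window_inter_window_succ (hk : 1 ≤ k) {i : ℕ} (h : i + k + 1 ≤ w.length)
    (hc : #(window k w i) = k) (hc' : #(window k w (i + 1)) = k)
    (hne : window k w i ≠ window k w (i + 1)) :
    window k w i ∩ window k w (i + 1) = window (k - 1) w (i + 1) ∧
      #(window (k - 1) w (i + 1)) = k - 1 ∧ w[i] ∉ window (k - 1) w (i + 1) := by
  rw [window_eq_insert (i := i) hk (by omega), window_succ_eq_insert hk h] at *
  set T := window (k - 1) w (i + 1)
  have hT : #T ≤ k - 1 := card_window_le _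
  have ha : w[i] ∉ T := fun hm => by rw [insert_eq_of_mem hm] at hc; omega
  have hb : w[i + k] ∉ T := fun hm => by rw [insert_eq_of_mem hm] at hc'; omega
  have hab : w[i] ≠ w[i + k] := fun he => hne (by rw [he])
  rw [card_insert_of_notMem ha] at hc
  refine ⟨?_, by omega, ha⟩
  ext v
  simp only [mem_inter, mem_insert]
  constructor
  · rintro ⟨h1 | hv, h2 | hv'⟩
    exacts [absurd (h1.symm.trans h2) hab, hv', hv, hv]
  · intro hv; exact ⟨Or.inr hv, Or.inr hv⟩

end Windows

section Kernels

variable {k : ℕ} {E : Finset (Finset V)}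

def TightNeighborsShareKernel (k : ℕ) (E : Finset (Finset V)) : Prop :=
  ∀ e ∈ E, ∃ K : Finset V, ∀ f ∈ E, f ≠ e → k - 1 ≤ #(e ∩ f) → e ∩ f = K

/-- Along three consecutive windows, the first entry of the middle window is shared with
the first window but not with the last, so the two overlaps would be different kernels. -/
lemma length_le_of_tightNeighborsShareKernel (hk : 2 ≤ k) (hE : TightNeighborsShareKernel k E)
    {w : List V} (hcard : ∀ e ∈ windows k w, #e = k) (hnd : (windows k w).Nodup)
    (hmem : ∀ e ∈ windows k w, e ∈ E) : w.length ≤ k + 1 := by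
  by_contra! hlen
  have hW : ∀ i ≤ 2, window k w i ∈ windows k w := fun i hi => window_mem_windows (by omega)
  have hne : ∀ i ≤ 1, window k w i ≠ window k w (i + 1) := fun i hi h =>
    absurd (window_injective_of_nodup hnd (by omega) (by omega) h) (by omega)
  obtain ⟨h01, hc01, -⟩ := window_inter_window_succ (i := 0) (by omega) (by omega)
    (hcard _ (hW 0 (by omega))) (hcard _ (hW 1 (by omega))) (hne 0 zero_le_one)
  obtain ⟨h12, hc12, hw1⟩ := window_inter_window_succ (i := 1) (by omega) (by omega)
    (hcard _ (hW 1 (by omega))) (hcard _ (hW 2 le_rfl)) (hne 1 le_rfl)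
  obtain ⟨K, hK⟩ := hE _ (hmem _ (hW 1 (by omega)))
  have hK0 := hK _ (hmem _ (hW 0 (by omega))) (hne 0 zero_le_one)
    (by rw [inter_comm, h01, hc01])
  have hK2 := hK _ (hmem _ (hW 2 le_rfl)) (hne 1 le_rfl).symm (by rw [h12, hc12])
  rw [inter_comm, h01] at hK0
  rw [h12, ← hK0] at hK2
  have hw1' : w[1] ∈ window (k - 1) w 1 := by
    simpa using getElem_mem_window (w := w) (k := k - 1) (i := 1) (j := 0) (by omega) (by omega)
  exact hw1 (hK2 ▸ hw1')

lemma chainsLenLE_two_of_tightNeighborsShareKernel (hk : 2 ≤ k)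
    (hE : TightNeighborsShareKernel k E) : ChainsLenLE k 2 E := by
  intro w ⟨_, _, hcard, hnd⟩ hmem
  have := length_le_of_tightNeighborsShareKernel hk hE hcard hnd hmem
  omega

lemma head?_ne_getLast?_of_nodup {α : Type*} {w : List α} (hnd : w.Nodup) (hlen : 2 ≤ w.length) :
    w.head? ≠ w.getLast? := by
  rw [List.head?_eq_getElem?, List.getLast?_eq_getElem?,
    List.getElem?_eq_getElem (by omega), List.getElem?_eq_getElem (by omega), ne_eq,
    Option.some_inj, hnd.getElem_inj_iff]
  omega

lemma semicycleFree_of_tightNeighborsShareKernel (hk : 2 ≤ k)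
    (hE : TightNeighborsShareKernel k E) : SemicycleFree k E := by
  rintro ⟨w, ⟨hk', hcycle, hcard, hnd⟩, hmem⟩
  have hlen := length_le_of_tightNeighborsShareKernel hk hE hcard hnd hmem
  rw [List.head?_eq_getElem?, List.getLast?_eq_getElem?, List.getElem?_eq_getElem (by omega),
    List.getElem?_eq_getElem (by omega), Option.some_inj] at hcycle
  rcases (by omega : w.length = k ∨ w.length = k + 1) with hl | hl
  · -- a single window: its `k` entries are distinct
    have h0 := hcard _ (window_mem_windows (i := 0) (by omega))
    rw [window, List.drop_zero, List.take_of_length_le hl.le] at h0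
    have hnodup : w.Nodup := Multiset.toFinset_card_eq_card_iff_nodup.1 (h0.trans hl.symm)
    exact absurd hcycle (by rw [hnodup.getElem_inj_iff]; omega)
  · -- two windows: a closed walk makes them equal
    have h01 : window k w 0 = window k w 1 := by
      rw [window_eq_insert (k := k) (i := 0) (by omega) (by omega),
        window_succ_eq_insert (k := k) (i := 0) (by omega) (by omega)]
      simp only [hcycle, hl, Nat.add_sub_cancel, zero_add]
    exact absurd (window_injective_of_nodup hnd (by omega) (by omega) h01) (by omega)

end Kernels

section Chains

variable {k : ℕ} {E : Finset (Finset V)}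

lemma windows_of_length_eq {w : List V} (h : w.length = k) : windows k w = [w.toFinset] := by
  simp [windows, h, List.take_of_length_le h.le]

lemma exists_chain_of_mem_edge (hk : 2 ≤ k) {e : Finset V} (he : e ∈ E) (hcard : #e = k)
    {u v : V} (hu : u ∈ e) (hv : v ∈ e) :
    ∃ w, IsChainSeq k w ∧ (∀ f ∈ windows k w, f ∈ E) ∧ u ∈ w ∧ v ∈ w := by
  have hlen : e.toList.length = k := by rw [length_toList, hcard]
  refine ⟨e.toList, ⟨hlen.ge, head?_ne_getLast?_of_nodup e.nodup_toList (by omega), ?_, ?_⟩,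
    ?_, mem_toList.2 hu, mem_toList.2 hv⟩ <;> simp [windows_of_length_eq hlen, hcard, he]

lemma windows_cons_append {K : Finset V} (hk : 1 ≤ k) (hK : #K = k - 1) (a b : V) :
    windows k (a :: (K.toList ++ [b])) = [insert a K, insert b K] := by
  obtain ⟨k, rfl⟩ : ∃ k', k = k' + 1 := ⟨k - 1, by omega⟩
  have hlen : K.toList.length = k := by simp [hK]
  simp [windows, List.range_succ, hlen, List.take_of_length_le]

lemma exists_chain_of_mem_star (hk : 1 ≤ k) {K : Finset V} (hK : #K = k - 1) {a b : V}
    (ha : a ∉ K) (hb : b ∉ K) (hab : a ≠ b) (haE : insert a K ∈ E) (hbE : insert b K ∈ E) :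
    ∃ w, IsChainSeq k w ∧ (∀ f ∈ windows k w, f ∈ E) ∧ a ∈ w ∧ b ∈ w := by
  have hne : insert a K ≠ insert b K := fun h =>
    (mem_insert.1 (h ▸ mem_insert_self a K)).elim hab ha
  refine ⟨a :: (K.toList ++ [b]), ⟨by simp; omega, ?_, ?_, ?_⟩, ?_, by simp, by simp⟩
  · rw [← List.cons_append, List.getLast?_concat]; simpa using hab
  all_goals simp only [windows_cons_append hk hK]
  · simp [card_insert_of_notMem ha, card_insert_of_notMem hb, hK]; omega
  · simp [hne]
  · simp [haE, hbE]

lemma exists_tight_pair_of_isChainSeq (hk : 2 ≤ k) {w : List V} (hw : IsChainSeq k w)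
    (hlen : w.length ≤ k + 1) {u v : V} (hu : u ∈ w) (hv : v ∈ w)
    (hsep : ∀ e ∈ windows k w, u ∈ e → v ∉ e) :
    ∃ f ∈ windows k w, ∃ g ∈ windows k w, f ≠ g ∧ k - 1 ≤ #(f ∩ g) ∧ u ∈ f ∧ v ∈ g := by
  obtain ⟨hk', -, hcard, hnd⟩ := hw
  obtain ⟨i, hi, hui⟩ := mem_window_of_mem (by omega) hk' hu
  obtain ⟨j, hj, hvj⟩ := mem_window_of_mem (by omega) hk' hv
  have hij : i ≠ j := by
    rintro rfl; exact hsep _ (window_mem_windows (by omega)) hui hvj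
  have hW : ∀ i ≤ 1, window k w i ∈ windows k w := fun i hi => window_mem_windows (by omega)
  have hne : window k w 0 ≠ window k w 1 := fun h =>
    absurd (window_injective_of_nodup hnd (by omega) (by omega) h) (by omega)
  obtain ⟨h01, hc01, -⟩ := window_inter_window_succ (i := 0) (by omega) (by omega)
    (hcard _ (hW 0 (by omega))) (hcard _ (hW 1 le_rfl)) hne
  rcases (by omega : i = 0 ∧ j = 1 ∨ i = 1 ∧ j = 0) with ⟨rfl, rfl⟩ | ⟨rfl, rfl⟩
  · exact ⟨_, hW 0 (by omega), _, hW 1 le_rfl, hne, by rw [h01, hc01], hui, hvj⟩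
  · exact ⟨_, hW 1 le_rfl, _, hW 0 (by omega), hne.symm, by rw [inter_comm, h01, hc01],
      hui, hvj⟩

end Chains

section Relabel

variable {W : Type*} [DecidableEq W] {k : ℕ}

lemma windows_map (f : V → W) (w : List V) :
    windows k (w.map f) = (windows k w).map (image f) := by
  simp only [windows_eq_map_window, List.length_map, List.map_map]
  refine List.map_congr_left fun i _ => ?_
  rw [Function.comp_apply, window, window, ← List.map_drop, ← List.map_take]
  exact Multiset.toFinset_map f (List.take k (List.drop i w) : Multiset V)

variable {f : V → W}

lemma windows_map_card_nodup (hf : Function.Injective f) {w : List V}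
    (hcard : ∀ e ∈ windows k w, #e = k) (hnd : (windows k w).Nodup) :
    (∀ e ∈ windows k (w.map f), #e = k) ∧ (windows k (w.map f)).Nodup := by
  rw [windows_map]
  refine ⟨fun e he => ?_, hnd.map (image_injective hf)⟩
  obtain ⟨e₀, he₀, rfl⟩ := List.mem_map.1 he
  rw [card_image_of_injective _ hf, hcard e₀ he₀]

lemma IsChainSeq.map (hf : Function.Injective f) {w : List V} (hw : IsChainSeq k w) :
    IsChainSeq k (w.map f) := by
  obtain ⟨hlen, hends, hcard, hnd⟩ := hw
  refine ⟨by simpa using hlen, ?_, windows_map_card_nodup hf hcard hnd⟩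
  rw [List.head?_map, List.getLast?_map]
  exact fun h => hends (Option.map_injective hf h)

lemma IsSemicycleSeq.map (hf : Function.Injective f) {w : List V} (hw : IsSemicycleSeq k w) :
    IsSemicycleSeq k (w.map f) := by
  obtain ⟨hlen, hends, hcard, hnd⟩ := hw
  refine ⟨by simpa using hlen, ?_, windows_map_card_nodup hf hcard hnd⟩
  rw [List.head?_map, List.getLast?_map, hends]

lemma windows_map_subset {E : Finset (Finset V)} {w : List V} (h : ∀ e ∈ windows k w, e ∈ E) :
    ∀ e ∈ windows k (w.map f), e ∈ E.image (image f) := by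
  rw [windows_map]
  intro e he
  obtain ⟨e₀, he₀, rfl⟩ := List.mem_map.1 he
  exact mem_image_of_mem _ (h e₀ he₀)

variable (σ : V ≃ W)

lemma image_image_image_equiv_symm (E : Finset (Finset V)) :
    (E.image (image σ)).image (image σ.symm) = E := by
  simp [Finset.image_image, Function.comp_def]

variable {E : Finset (Finset V)}

lemma SemicycleFree.image_equiv (h : SemicycleFree k E) : SemicycleFree k (E.image (image σ)) := by
  rintro ⟨w, hw, hE⟩
  refine h ⟨w.map σ.symm, hw.map σ.symm.injective, ?_⟩
  simpa [image_image_image_equiv_symm] using windows_map_subset (f := σ.symm) hE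

lemma ChainsLenLE.image_equiv {l : ℕ} (h : ChainsLenLE k l E) :
    ChainsLenLE k l (E.image (image σ)) := by
  intro w hw hE
  simpa using h _ (hw.map σ.symm.injective) <| by
    simpa [image_image_image_equiv_symm] using windows_map_subset (f := σ.symm) hE

variable [Fintype V] [Fintype W]

lemma ChainConn.image_equiv (h : ChainConn k E) : ChainConn k (E.image (image σ)) := by
  intro u _ v _ huv
  obtain ⟨w, hw, hE, hu, hv⟩ :=
    h (σ.symm u) (mem_univ _) (σ.symm v) (mem_univ _) (σ.symm.injective.ne huv)
  exact ⟨w.map σ, hw.map σ.injective, windows_map_subset hE,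
    by simpa using List.mem_map_of_mem (f := σ) hu, by simpa using List.mem_map_of_mem (f := σ) hv⟩

lemma EdgeMinimal.image_equiv (h : EdgeMinimal k E) : EdgeMinimal k (E.image (image σ)) := by
  intro e he hconn
  obtain ⟨e₀, he₀, rfl⟩ := mem_image.1 he
  rw [← image_erase (image_injective σ.injective)] at hconn
  exact h e₀ he₀ (by simpa [image_image_image_equiv_symm] using hconn.image_equiv σ.symm)

lemma exists_relabel_fin {n : ℕ} (hn : Fintype.card V = n) {l : ℕ} (hT : IsLHypertree k l E)
    (hmin : EdgeMinimal k E) :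
    ∃ E' : Finset (Finset (Fin n)), IsLHypertree k l E' ∧ EdgeMinimal k E' ∧ #E' = #E := by
  let σ := Fintype.equivFinOfCardEq hn
  obtain ⟨⟨hunif, hconn, hfree⟩, hlen⟩ := hT
  refine ⟨E.image (image σ), ⟨⟨?_, hconn.image_equiv σ, hfree.image_equiv σ⟩,
    hlen.image_equiv σ⟩, hmin.image_equiv σ,
    card_image_of_injective _ (image_injective σ.injective)⟩
  simp only [mem_image]
  rintro _ ⟨e, he, rfl⟩
  rw [card_image_of_injective _ σ.injective, hunif e he]

end Relabel

namespace TournamentGrid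

variable {k M : ℕ}

def forwardSteps (M : ℕ) : Finset (ZMod (2 * M + 3)) := (Icc 1 (M + 1)).image (↑)

/-- The regular tournament on `ZMod (2 * M + 3)`: `i` beats `i + 1, …, i + M + 1`. -/
def Beats (i j : ZMod (2 * M + 3)) : Prop := j - i ∈ forwardSteps M

lemma card_forwardSteps : #(forwardSteps M) = M + 1 := by
  rw [forwardSteps, card_image_of_injOn, Nat.card_Icc, Nat.add_sub_cancel]
  intro a ha b hb h
  simp only [coe_Icc, Set.mem_Icc] at ha hb
  rw [← ZMod.val_cast_of_lt (n := 2 * M + 3) (a := a) (by omega),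
    ← ZMod.val_cast_of_lt (n := 2 * M + 3) (a := b) (by omega), h]

lemma beats_iff {i j : ZMod (2 * M + 3)} :
    Beats i j ↔ ∃ d : ℕ, 1 ≤ d ∧ d ≤ M + 1 ∧ (d : ZMod (2 * M + 3)) = j - i := by
  simp [Beats, forwardSteps, and_assoc]

lemma Beats.ne {i j : ZMod (2 * M + 3)} (h : Beats i j) : i ≠ j := by
  rintro rfl
  obtain ⟨d, h1, h2, hd⟩ := beats_iff.1 h
  rw [sub_self, ZMod.natCast_eq_zero_iff] at hd
  exact absurd (Nat.le_of_dvd (by omega) hd) (by omega)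

lemma Beats.not_beats {i j : ZMod (2 * M + 3)} (h : Beats i j) : ¬Beats j i := by
  intro h'
  obtain ⟨d, h1, h2, hd⟩ := beats_iff.1 h
  obtain ⟨d', h1', h2', hd'⟩ := beats_iff.1 h'
  have hsum : ((d + d' : ℕ) : ZMod (2 * M + 3)) = 0 := by push_cast; rw [hd, hd']; ring
  rw [ZMod.natCast_eq_zero_iff] at hsum
  exact absurd (Nat.le_of_dvd (by omega) hsum) (by omega)

lemma beats_or_beats {i j : ZMod (2 * M + 3)} (h : i ≠ j) : Beats i j ∨ Beats j i := by
  set c := j - i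
  have hc : c ≠ 0 := sub_ne_zero.2 h.symm
  have hv : 0 < c.val := Nat.pos_of_ne_zero ((ZMod.val_ne_zero c).2 hc)
  have hlt : c.val < 2 * M + 3 := ZMod.val_lt c
  by_cases hle : c.val ≤ M + 1
  · exact Or.inl (beats_iff.2 ⟨c.val, hv, hle, ZMod.natCast_zmod_val c⟩)
  · refine Or.inr (beats_iff.2 ⟨2 * M + 3 - c.val, by omega, by omega, ?_⟩)
    rw [Nat.cast_sub hlt.le, ZMod.natCast_self, ZMod.natCast_zmod_val, zero_sub, neg_sub]

lemma beats_add_one (i : ZMod (2 * M + 3)) : Beats i (i + 1) :=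
  beats_iff.2 ⟨1, le_rfl, by omega, by simp⟩

/-- A vertex `(row, position, level)`. -/
abbrev Vertex (k M : ℕ) := ZMod (2 * M + 3) × ZMod (2 * M + 3) × Fin (k - 1)

variable (k) in
/-- The line of slope `c` through `x` in row `r`, one vertex per level. -/
def block (r c x : ZMod (2 * M + 3)) : Finset (Vertex k M) :=
  univ.image fun a : Fin (k - 1) => (r, x + (a : ℕ) * c, a)

lemma mem_block {r c x : ZMod (2 * M + 3)} {v : Vertex k M} :
    v ∈ block k r c x ↔ v.1 = r ∧ v.2.1 = x + (v.2.2 : ℕ) * c := by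
  constructor
  · simp only [block, mem_image, mem_univ, true_and]
    rintro ⟨a, rfl⟩
    exact ⟨rfl, rfl⟩
  · obtain ⟨r', y, a⟩ := v
    rintro ⟨rfl, hy⟩
    exact mem_image.2 ⟨a, mem_univ a, by rw [← hy]⟩

lemma card_block (r c x : ZMod (2 * M + 3)) : #(block k r c x) = k - 1 := by
  rw [block, card_image_of_injective _ fun a b h => congrArg (fun v : Vertex k M => v.2.2) h,
    card_univ, Fintype.card_fin]

lemma eq_of_mem_block_of_mem_block {r r' c x x' : ZMod (2 * M + 3)} {v : Vertex k M}
    (h : v ∈ block k r c x) (h' : v ∈ block k r' c x') : x = x' :=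
  add_right_cancel ((mem_block.1 h).2.symm.trans (mem_block.1 h').2)

/-- The points of levels `0` and `1` recover the line from the block. -/
lemma eq_of_block_eq (hk : 3 ≤ k) {r r' c c' x x' : ZMod (2 * M + 3)}
    (h : block k r c x = block k r' c' x') : r = r' ∧ c = c' ∧ x = x' := by
  have h0 : ((r, x, ⟨0, by omega⟩) : Vertex k M) ∈ block k r' c' x' :=
    h ▸ mem_block.2 ⟨rfl, by simp⟩
  have h1 : ((r, x + c, ⟨1, by omega⟩) : Vertex k M) ∈ block k r' c' x' :=
    h ▸ mem_block.2 ⟨rfl, by simp⟩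
  rw [mem_block] at h0 h1
  simp only [Nat.cast_zero, zero_mul, add_zero, Nat.cast_one, one_mul] at h0 h1
  refine ⟨h0.1, ?_, h0.2⟩
  rw [h0.2] at h1
  exact add_left_cancel h1.2

lemma notMem_block_of_ne {r c x : ZMod (2 * M + 3)} {u : Vertex k M} (h : u.1 ≠ r) :
    u ∉ block k r c x := fun hu => h (mem_block.1 hu).1

/-- The slope `r - u.1` of the line records the row of the apex. -/
def edge (u : Vertex k M) (r x : ZMod (2 * M + 3)) : Finset (Vertex k M) :=
  insert u (block k r (r - u.1) x)

def edges (k M : ℕ) : Finset (Finset (Vertex k M)) :=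
  (univ ×ˢ forwardSteps M ×ˢ univ).image fun p : Vertex k M × ZMod (2 * M + 3) × ZMod (2 * M + 3) =>
    edge p.1 (p.1.1 + p.2.1) p.2.2

lemma mem_edge {u v : Vertex k M} {r x : ZMod (2 * M + 3)} :
    v ∈ edge u r x ↔ v = u ∨ v ∈ block k r (r - u.1) x :=
  mem_insert

lemma card_edge (hk : 1 ≤ k) {u : Vertex k M} {r : ZMod (2 * M + 3)} (h : Beats u.1 r)
    (x : ZMod (2 * M + 3)) : #(edge u r x) = k := by
  rw [edge, card_insert_of_notMem (notMem_block_of_ne h.ne), card_block]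
  omega

lemma mem_edges {e : Finset (Vertex k M)} :
    e ∈ edges k M ↔ ∃ u r x, Beats u.1 r ∧ edge u r x = e := by
  rw [edges, mem_image]
  constructor
  · rintro ⟨⟨u, d, x⟩, hd, rfl⟩
    simp only [mem_product, mem_univ, true_and, and_true] at hd
    exact ⟨u, u.1 + d, x, by rwa [Beats, add_sub_cancel_left], rfl⟩
  · rintro ⟨u, r, x, h, rfl⟩
    exact ⟨(u, r - u.1, x), by simpa [Beats] using h, by simp⟩

section Intersections

variable {u u' : Vertex k M} {r r' x x' : ZMod (2 * M + 3)}

/-- Two edges with blocks in different rows share at most their apexes, and sharing both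
would make the two rows beat each other. -/
lemma row_eq_of_le_card_inter (hk : 3 ≤ k) (h : Beats u.1 r) (h' : Beats u'.1 r')
    (hcard : k - 1 ≤ #(edge u r x ∩ edge u' r' x')) : r = r' := by
  by_contra hrr
  set S := edge u r x ∩ edge u' r' x'
  have hsub : S ⊆ {u, u'} := by
    intro v hv
    rw [mem_inter, mem_edge, mem_edge] at hv
    rcases hv with ⟨rfl | hv, rfl | hv'⟩
    · simp
    · simp
    · simp
    · exact absurd ((mem_block.1 hv).1.symm.trans (mem_block.1 hv').1) hrr
  have huu' : u ≠ u' := by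
    rintro rfl
    have := card_le_card hsub
    rw [insert_eq_of_mem (mem_singleton_self u), card_singleton] at this
    omega
  have hS : S = {u, u'} :=
    eq_of_subset_of_card_le hsub (by rw [card_pair huu']; omega)
  have hu : u ∈ edge u' r' x' := (mem_inter.1 (hS ▸ mem_insert_self u {u'})).2
  have hu' : u' ∈ edge u r x := (mem_inter.1 (hS ▸ mem_insert_of_mem (mem_singleton_self u'))).1
  rw [mem_edge] at hu hu'
  have hur' := (mem_block.1 (hu.resolve_left huu')).1
  have hu'r := (mem_block.1 (hu'.resolve_left huu'.symm)).1
  rw [hu'r] at h'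
  rw [hur'] at h
  exact h.not_beats h'

lemma inter_edge_eq_block (hk : 3 ≤ k) (h : Beats u.1 r) (h' : Beats u'.1 r')
    (hne : edge u r x ≠ edge u' r' x') (hcard : k - 1 ≤ #(edge u r x ∩ edge u' r' x')) :
    edge u r x ∩ edge u' r' x' = block k r (r - u.1) x ∧ u.1 = u'.1 := by
  obtain rfl := row_eq_of_le_card_inter hk h h' hcard
  have hu : u ∉ block k r (r - u'.1) x' := notMem_block_of_ne h.ne
  have hu' : u' ∉ block k r (r - u.1) x := notMem_block_of_ne h'.ne
  have huu' : u ≠ u' := by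
    rintro rfl
    rw [edge, edge, ← insert_inter_distrib] at hcard
    obtain ⟨v, hv⟩ : (block k r (r - u.1) x ∩ block k r (r - u.1) x').Nonempty := by
      rw [← card_pos]
      have := card_insert_le u (block k r (r - u.1) x ∩ block k r (r - u.1) x')
      omega
    rw [mem_inter] at hv
    exact hne (by rw [edge, edge, eq_of_mem_block_of_mem_block hv.1 hv.2])
  have hsub : edge u r x ∩ edge u' r x' ⊆ block k r (r - u.1) x := fun v hv => by
    rw [mem_inter, mem_edge, mem_edge] at hv
    rcases hv with ⟨rfl | hv, hv'⟩
    · exact absurd (hv'.resolve_left huu') hu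
    · exact hv
  have hsub' : edge u r x ∩ edge u' r x' ⊆ block k r (r - u'.1) x' := fun v hv => by
    rw [mem_inter, mem_edge, mem_edge] at hv
    rcases hv with ⟨hv, rfl | hv'⟩
    · exact absurd (hv.resolve_left huu'.symm) hu'
    · exact hv'
  have hK := eq_of_subset_of_card_le hsub (by rw [card_block]; exact hcard)
  have hK' := eq_of_subset_of_card_le hsub' (by rw [card_block]; exact hcard)
  refine ⟨hK, ?_⟩
  have := (eq_of_block_eq hk (hK.symm.trans hK')).2.1
  simpa using this

lemma eq_of_edge_eq (hk : 3 ≤ k) (h : Beats u.1 r) (h' : Beats u'.1 r')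
    (heq : edge u r x = edge u' r' x') : u = u' ∧ r = r' ∧ x = x' := by
  obtain rfl := row_eq_of_le_card_inter hk h h'
    (by rw [heq, inter_self, card_edge (by omega) h']; omega)
  have hu : u ∈ edge u' r x' := heq ▸ mem_insert_self _ _
  obtain rfl := (mem_edge.1 hu).resolve_right (notMem_block_of_ne h.ne)
  refine ⟨rfl, rfl, ?_⟩
  have hK : block k r (r - u.1) x = block k r (r - u.1) x' := by
    rw [← erase_insert (notMem_block_of_ne h.ne), ← edge, heq, edge,
      erase_insert (notMem_block_of_ne h.ne)]
  exact (eq_of_block_eq hk hK).2.2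

end Intersections

lemma tightNeighborsShareKernel_edges (hk : 3 ≤ k) :
    TightNeighborsShareKernel k (edges k M) := by
  intro e he
  obtain ⟨u, r, x, h, rfl⟩ := mem_edges.1 he
  refine ⟨block k r (r - u.1) x, fun f hf hne hcard => ?_⟩
  obtain ⟨u', r', x', h', rfl⟩ := mem_edges.1 hf
  exact (inter_edge_eq_block hk h h' hne.symm hcard).1

/-- The vertex private to each edge of a tight pair is its apex. -/
lemma row_eq_of_tight_pair (hk : 3 ≤ k) {f g : Finset (Vertex k M)} (hf : f ∈ edges k M)
    (hg : g ∈ edges k M) (hne : f ≠ g) (hcard : k - 1 ≤ #(f ∩ g)) {a b : Vertex k M}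
    (ha : a ∈ f) (ha' : a ∉ g) (hb : b ∈ g) (hb' : b ∉ f) : a.1 = b.1 := by
  obtain ⟨u, r, x, h, rfl⟩ := mem_edges.1 hf
  obtain ⟨u', r', x', h', rfl⟩ := mem_edges.1 hg
  obtain ⟨hK, hrow⟩ := inter_edge_eq_block hk h h' hne hcard
  obtain ⟨hK', -⟩ := inter_edge_eq_block hk h' h hne.symm (by rwa [inter_comm])
  have hau : a = u := (mem_edge.1 ha).resolve_right fun hK₀ =>
    ha' (mem_inter.1 (hK ▸ hK₀)).2
  have hbu' : b = u' := (mem_edge.1 hb).resolve_right fun hK₀ =>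
    hb' (mem_inter.1 (hK' ▸ hK₀)).2
  rw [hau, hbu', hrow]

def edgeThrough (u v : Vertex k M) : Finset (Vertex k M) :=
  edge u v.1 (v.2.1 - (v.2.2 : ℕ) * (v.1 - u.1))

section EdgeThrough

variable {u v : Vertex k M}

lemma mem_edgeThrough_left : u ∈ edgeThrough u v := mem_insert_self _ _

lemma mem_block_edgeThrough : v ∈ block k v.1 (v.1 - u.1) (v.2.1 - (v.2.2 : ℕ) * (v.1 - u.1)) :=
  mem_block.2 ⟨rfl, by ring⟩

lemma mem_edgeThrough_right : v ∈ edgeThrough u v := mem_insert_of_mem mem_block_edgeThrough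

lemma edgeThrough_mem_edges (h : Beats u.1 v.1) : edgeThrough u v ∈ edges k M :=
  mem_edges.2 ⟨u, v.1, _, h, rfl⟩

lemma eq_edgeThrough (h : Beats u.1 v.1) {e : Finset (Vertex k M)} (he : e ∈ edges k M)
    (hu : u ∈ e) (hv : v ∈ e) : e = edgeThrough u v := by
  obtain ⟨u', r', x', h', rfl⟩ := mem_edges.1 he
  rw [mem_edge] at hu hv
  rcases hu with rfl | hu <;> rcases hv with rfl | hv
  · exact absurd rfl h.ne
  · obtain rfl : v.1 = r' := (mem_block.1 hv).1
    rw [edgeThrough, eq_of_mem_block_of_mem_block hv mem_block_edgeThrough]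
  · rw [← (mem_block.1 hu).1] at h'
    exact absurd h' h.not_beats
  · exact absurd ((mem_block.1 hu).1.trans (mem_block.1 hv).1.symm) h.ne

end EdgeThrough

lemma chainConn_edges (hk : 3 ≤ k) : ChainConn k (edges k M) := by
  intro u _ v _ huv
  by_cases hrow : u.1 = v.1
  · have hu := beats_add_one u.1
    have hv : Beats v.1 (u.1 + 1) := hrow ▸ hu
    refine exists_chain_of_mem_star (K := block k (u.1 + 1) 1 0) (by omega) (card_block _ _ _)
      (notMem_block_of_ne hu.ne) (notMem_block_of_ne hv.ne) huv ?_ ?_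
    · exact mem_edges.2 ⟨u, u.1 + 1, 0, hu, by simp [edge]⟩
    · exact mem_edges.2 ⟨v, u.1 + 1, 0, hv, by simp [edge, ← hrow]⟩
  · rcases beats_or_beats hrow with h | h
    · exact exists_chain_of_mem_edge (by omega) (edgeThrough_mem_edges h) (card_edge (by omega) h _)
        mem_edgeThrough_left mem_edgeThrough_right
    · obtain ⟨w, hw, hE, hv, hu⟩ := exists_chain_of_mem_edge (by omega) (edgeThrough_mem_edges h)
        (card_edge (by omega) h _) mem_edgeThrough_left mem_edgeThrough_right
      exact ⟨w, hw, hE, hu, hv⟩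

lemma isLHypertree_edges (hk : 3 ≤ k) : IsLHypertree k 2 (edges k M) := by
  have hker := tightNeighborsShareKernel_edges (M := M) hk
  refine ⟨⟨fun e he => ?_, chainConn_edges hk,
    semicycleFree_of_tightNeighborsShareKernel (by omega) hker⟩,
    chainsLenLE_two_of_tightNeighborsShareKernel (by omega) hker⟩
  obtain ⟨u, r, x, h, rfl⟩ := mem_edges.1 he
  exact card_edge (by omega) h x

/-- Deleting the edge through an apex `u` and a vertex `v` of its block separates them: a chain
through both has at most two edges, neither containing both, and such a pair of edges would put
`u` and `v` in the row of their apexes. -/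
lemma edgeMinimal_edges (hk : 3 ≤ k) : EdgeMinimal k (edges k M) := by
  intro e he hconn
  obtain ⟨u, r, x, h, rfl⟩ := mem_edges.1 he
  set v : Vertex k M := (r, x, ⟨0, by omega⟩)
  have huv : Beats u.1 v.1 := h
  have hv : v ∈ edge u r x := mem_insert_of_mem (mem_block.2 ⟨rfl, by simp [v]⟩)
  have hsep : ∀ f ∈ (edges k M).erase (edge u r x), u ∈ f → v ∉ f := fun f hf hu hv' =>
    ne_of_mem_erase hf <| (eq_edgeThrough huv (mem_of_mem_erase hf) hu hv').trans
      (eq_edgeThrough huv he (mem_insert_self _ _) hv).symm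
  obtain ⟨w, hw, hE, hu, hv⟩ :=
    hconn u (mem_univ _) v (mem_univ _) fun h' => huv.ne (congrArg Prod.fst h')
  have hE' : ∀ f ∈ windows k w, f ∈ edges k M := fun f hf => mem_of_mem_erase (hE f hf)
  have hlen := length_le_of_tightNeighborsShareKernel (by omega)
    (tightNeighborsShareKernel_edges hk) hw.2.2.1 hw.2.2.2 hE'
  obtain ⟨f, hf, g, hg, hfg, hcard, huf, hvg⟩ := exists_tight_pair_of_isChainSeq (by omega) hw hlen
    hu hv fun f hf => hsep f (hE f hf)
  exact huv.ne <| row_eq_of_tight_pair hk (hE' f hf) (hE' g hg) hfg hcard huf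
    (fun hug => hsep g (hE g hg) hug hvg) hvg (fun hvf => hsep f (hE f hf) huf hvf)

lemma card_edges (hk : 3 ≤ k) : #(edges k M) = (M + 1) * (2 * M + 3) ^ 3 * (k - 1) := by
  rw [edges, card_image_of_injOn]
  · simp only [card_product, card_univ, Fintype.card_prod, ZMod.card, Fintype.card_fin,
      card_forwardSteps]
    ring
  · rintro ⟨u, d, x⟩ hp ⟨u', d', x'⟩ hp' heq
    simp only [coe_product, coe_univ, Set.mem_prod, Set.mem_univ, mem_coe, true_and,
      and_true] at hp hp'
    have hb : Beats u.1 (u.1 + d) := by rwa [Beats, add_sub_cancel_left]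
    have hb' : Beats u'.1 (u'.1 + d') := by rwa [Beats, add_sub_cancel_left]
    obtain ⟨rfl, hr, rfl⟩ := eq_of_edge_eq hk hb hb' heq
    rw [add_left_cancel hr]

lemma card_vertex : Fintype.card (Vertex k M) = (2 * M + 3) ^ 2 * (k - 1) := by
  simp only [Fintype.card_prod, ZMod.card, Fintype.card_fin]
  ring

lemma strictMono_card_vertex (hk : 2 ≤ k) : StrictMono fun M => Fintype.card (Vertex k M) := by
  intro a b hab
  simp only [card_vertex]
  exact Nat.mul_lt_mul_of_pos_right (Nat.pow_lt_pow_left (by omega) two_ne_zero) (by omega)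

open Filter Topology in
lemma tendsto_card_edges_div_choose (hk : 3 ≤ k) :
    Tendsto (fun M => (#(edges k M) : ℝ) / ((Fintype.card (Vertex k M)).choose 2 : ℝ)) atTop
      (𝓝 (1 / ((k : ℝ) - 1))) := by
  obtain ⟨q, hq_def⟩ : ∃ q : ℝ, q = k - 1 := ⟨_, rfl⟩
  have hq : 2 ≤ q := by
    have : (3 : ℝ) ≤ k := by exact_mod_cast hk
    linarith
  have hx : Tendsto (fun M : ℕ => ((2 * M + 3 : ℕ) : ℝ)⁻¹) atTop (𝓝 0) :=
    tendsto_inv_atTop_zero.comp <| tendsto_natCast_atTop_atTop.comp <|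
      tendsto_atTop_mono (fun M => by simp only [id]; omega) tendsto_id
  have hlim := ((tendsto_const_nhds (x := (1 : ℝ))).sub hx).div
    ((tendsto_const_nhds (x := q)).sub (hx.pow 2)) (by linarith)
  rw [sub_zero, zero_pow two_ne_zero, sub_zero] at hlim
  rw [← hq_def]
  refine hlim.congr fun M => ?_
  -- with `R = 2M + 3`: `(R - 1) R³ q / 2` edges over `C(R² q, 2)` pairs is `(1 - R⁻¹) / (q - R⁻²)`
  have hkq : ((k - 1 : ℕ) : ℝ) = q := by rw [Nat.cast_sub (by omega), hq_def, Nat.cast_one]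
  rw [Pi.div_apply, card_edges hk, card_vertex, Nat.cast_choose_two]
  push_cast [hkq]
  have hR : (3 : ℝ) ≤ 2 * M + 3 := by have := M.cast_nonneg (α := ℝ); linarith
  have hden : (2 * (M : ℝ) + 3) ^ 2 * q - 1 ≠ 0 := by nlinarith
  field_simp
  ring

end TournamentGrid

/-- for `k ≥ 3` there is an infinite sequence of `k`-uniform
edge-minimal (2-)hypertrees with `n_m` strictly increasing and
`e_m ∼ (1/(k-1))·C(n_m, 2)`. -/
theorem stmt14 (k : ℕ) (hk : 3 ≤ k) : ∃ n e : ℕ → ℕ, StrictMono n ∧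
    (∀ m, ∃ E : Finset (Finset (Fin (n m))),
      IsLHypertree k 2 E ∧ EdgeMinimal k E ∧ E.card = e m) ∧
    Filter.Tendsto (fun m => (e m : ℝ) / ((n m).choose 2 : ℝ))
      Filter.atTop (nhds (1 / ((k : ℝ) - 1))) :=
  ⟨fun M => Fintype.card (TournamentGrid.Vertex k M), fun M => #(TournamentGrid.edges k M),
    TournamentGrid.strictMono_card_vertex (by omega),
    fun _ => exists_relabel_fin rfl (TournamentGrid.isLHypertree_edges hk)
      (TournamentGrid.edgeMinimal_edges hk),
    TournamentGrid.tendsto_card_edges_div_choose hk⟩
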